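/- If A is a non-negative definite (respectively, positive definite) hyperhermitian n×n quaternionic matrix, then its Moore determinant satisfies det(A) ≥ 0 (respectively, det(A) > 0). -/

import Mathlib

open Quaternion Matrix

noncomputable section

/-- The four real components of a quaternion. -/
def qcomp (q : ℍ[ℝ]) : Fin 4 → ℝ := ![q.re, q.imI, q.imJ, q.imK]

/-- The quaternion units `1, i, j, k`. -/
def qunit : Fin 4 → ℍ[ℝ] := ![1, ⟨0,1,0,0⟩, ⟨0,0,1,0⟩, ⟨0,0,0,1⟩]

/-- The `4n×4n` real symmetric matrix `ᴿA` of the real bilinear form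
`(x,y) ↦ Re(Σ conj(x_i) a_{ij} y_j)` on `ℝ⁴ⁿ`, the realization of `ℍⁿ`, in the basis
`e_i·1, e_i·i, e_i·j, e_i·k`. -/
def realMat {n : ℕ} (A : Matrix (Fin n) (Fin n) ℍ[ℝ]) :
    Matrix (Fin n × Fin 4) (Fin n × Fin 4) ℝ :=
  Matrix.of fun p r => (star (qunit p.2) * A p.1 r.1 * qunit r.2).re

/-- The real coordinates of the entries of a quaternionic matrix. -/
def coords {n : ℕ} (A : Matrix (Fin n) (Fin n) ℍ[ℝ]) : Fin n × Fin n × Fin 4 → ℝ :=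
  fun t => qcomp (A t.1 t.2.1) t.2.2

/-- `P` is the Moore determinant on hyperhermitian `n×n` quaternionic matrices:
a polynomial function (in the real coordinates of the entries) satisfying
`det(ᴿA) = P(A)⁴` for all hyperhermitian `A`, and `P(Id) = 1`. -/
def IsMooreDet (n : ℕ) (P : Matrix (Fin n) (Fin n) ℍ[ℝ] → ℝ) : Prop :=
  (∃ p : MvPolynomial (Fin n × Fin n × Fin 4) ℝ,
    ∀ A : Matrix (Fin n) (Fin n) ℍ[ℝ], A.IsHermitian → P A = MvPolynomial.eval (coords A) p) ∧
  (∀ A : Matrix (Fin n) (Fin n) ℍ[ℝ], A.IsHermitian → (realMat A).det = (P A) ^ 4) ∧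
  P 1 = 1

/-- The (real-valued) quadratic form `x ↦ Σ conj(x_i) a_{ij} x_j` of a hyperhermitian matrix. -/
def qform {n : ℕ} (A : Matrix (Fin n) (Fin n) ℍ[ℝ]) (x : Fin n → ℍ[ℝ]) : ℍ[ℝ] :=
  ∑ i, ∑ j, star (x i) * A i j * x j

/-- Non-negative definiteness of a hyperhermitian quaternionic matrix. -/
def QPosSemidef {n : ℕ} (A : Matrix (Fin n) (Fin n) ℍ[ℝ]) : Prop :=
  ∀ x : Fin n → ℍ[ℝ], 0 ≤ (qform A x).re

/-- Positive definiteness of a hyperhermitian quaternionic matrix. -/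
def QPosDef {n : ℕ} (A : Matrix (Fin n) (Fin n) ℍ[ℝ]) : Prop :=
  ∀ x : Fin n → ℍ[ℝ], x ≠ 0 → 0 < (qform A x).re

@[simp] lemma qunit_re (a : Fin 4) : (qunit a).re = ![1, 0, 0, 0] a := by
  fin_cases a <;> rfl
@[simp] lemma qunit_imI (a : Fin 4) : (qunit a).imI = ![0, 1, 0, 0] a := by
  fin_cases a <;> rfl
@[simp] lemma qunit_imJ (a : Fin 4) : (qunit a).imJ = ![0, 0, 1, 0] a := by
  fin_cases a <;> rfl
@[simp] lemma qunit_imK (a : Fin 4) : (qunit a).imK = ![0, 0, 0, 1] a := by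
  fin_cases a <;> rfl
lemma qsum (q : ℍ[ℝ]) : ∑ a : Fin 4, qcomp q a • qunit a = q := by
  refine Quaternion.ext _ _ ?_ ?_ ?_ ?_ <;> simp [qcomp, Fin.sum_univ_four]
lemma qcomp_sum (v : Fin 4 → ℝ) (a : Fin 4) : qcomp (∑ b : Fin 4, v b • qunit b) a = v a := by
  fin_cases a <;>
  simp [qcomp, Fin.sum_univ_four]
lemma re_qform {n : ℕ} (B : Matrix (Fin n) (Fin n) ℍ[ℝ]) (v : Fin n × Fin 4 → ℝ) :
    (qform B (fun i => ∑ a : Fin 4, v (i,a) • qunit a)).re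
      = v ⬝ᵥ (realMat B *ᵥ v) := by
  have hre : ∀ s : Finset (Fin n), ∀ f : Fin n → ℍ[ℝ], (∑ i ∈ s, f i).re = ∑ i ∈ s, (f i).re :=
    fun s f => map_sum (QuaternionAlgebra.reₗ (-1 : ℝ) 0 (-1)) f s
  unfold qform realMat
  simp only [dotProduct, Matrix.mulVec, Matrix.of_apply, Fintype.sum_prod_type]
  rw [hre]
  refine Finset.sum_congr rfl fun i _ => ?_
  rw [hre]
  have h4 : ∀ g : Fin 4 → ℍ[ℝ], (∑ b : Fin 4, g b).re = ∑ b : Fin 4, (g b).re :=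
    fun g => map_sum (QuaternionAlgebra.reₗ (-1 : ℝ) 0 (-1)) g Finset.univ
  have inner : ∀ j, (star (∑ a : Fin 4, v (i,a) • qunit a) * B i j *
      ∑ b : Fin 4, v (j,b) • qunit b).re
      = ∑ a : Fin 4, ∑ b : Fin 4, v (i,a) * (v (j,b) * (star (qunit a) * B i j * qunit b).re) := by
    intro j
    rw [star_sum, Finset.sum_mul, Finset.sum_mul, h4]
    refine Finset.sum_congr rfl fun a _ => ?_
    rw [Finset.mul_sum, h4]
    refine Finset.sum_congr rfl fun b _ => ?_
    rw [Quaternion.star_smul, smul_mul_assoc, smul_mul_assoc, mul_smul_comm]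
    simp only [Quaternion.re_smul, smul_eq_mul]
  simp only [inner]
  rw [Finset.sum_comm]
  refine Finset.sum_congr rfl fun a _ => ?_
  simp only [Finset.mul_sum]
  refine Finset.sum_congr rfl fun j _ => ?_
  refine Finset.sum_congr rfl fun b _ => ?_
  ring
lemma realMat_isHermitian {n : ℕ} {A : Matrix (Fin n) (Fin n) ℍ[ℝ]} (hA : A.IsHermitian) :
    (realMat A).IsHermitian := by
  ext p r
  simp only [realMat, Matrix.conjTranspose_apply, Matrix.of_apply, star_trivial]
  have hArp : A r.1 p.1 = star (A p.1 r.1) := by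
    conv_lhs => rw [← hA]
    rfl
  have : star (qunit r.2) * A r.1 p.1 * qunit p.2
      = star (star (qunit p.2) * A p.1 r.1 * qunit r.2) := by
    rw [StarMul.star_mul, StarMul.star_mul, star_star, hArp, mul_assoc]
  rw [this, Quaternion.re_star]
lemma realMat_posDef {n : ℕ} {A : Matrix (Fin n) (Fin n) ℍ[ℝ]} (hA : A.IsHermitian)
    (h : ∀ x : Fin n → ℍ[ℝ], x ≠ 0 → 0 < (qform A x).re) : (realMat A).PosDef := by
  refine Matrix.PosDef.of_dotProduct_mulVec_pos (realMat_isHermitian hA) fun v hv => ?_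
  have hx : (fun i => ∑ a : Fin 4, v (i,a) • qunit a) ≠ 0 := by
    intro h0
    apply hv
    funext p
    have := congrFun h0 p.1
    have h2 := qcomp_sum (fun a => v (p.1, a)) p.2
    rw [this] at h2
    have : ∀ b, qcomp (0 : ℍ[ℝ]) b = 0 := by intro b; fin_cases b <;> simp [qcomp]
    simp only [Pi.zero_apply] at h2
    rw [this p.2] at h2
    exact h2.symm
  have := h _ hx
  rw [re_qform] at this
  simpa using this
lemma sum_re {ι : Type*} (s : Finset ι) (f : ι → ℍ[ℝ]) :
    (∑ i ∈ s, f i).re = ∑ i ∈ s, (f i).re :=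
  map_sum (QuaternionAlgebra.reₗ (-1 : ℝ) 0 (-1)) f s
lemma qform_smul_add {n : ℕ} (a b : ℝ) (B C : Matrix (Fin n) (Fin n) ℍ[ℝ])
    (x : Fin n → ℍ[ℝ]) :
    (qform (a • B + b • C) x).re = a * (qform B x).re + b * (qform C x).re := by
  unfold qform
  simp only [Matrix.add_apply, Matrix.smul_apply, mul_add, add_mul, smul_mul_assoc,
    mul_smul_comm, Finset.sum_add_distrib, sum_re, Quaternion.re_add, Quaternion.re_smul,
    smul_eq_mul, Finset.mul_sum]
lemma qform_one {n : ℕ} (x : Fin n → ℍ[ℝ]) :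
    (qform 1 x).re = ∑ i, Quaternion.normSq (x i) := by
  unfold qform
  simp only [Matrix.one_apply, mul_ite, mul_one, mul_zero, ite_mul, zero_mul,
    Finset.sum_ite_eq, Finset.mem_univ, if_true, sum_re]
  refine Finset.sum_congr rfl fun i _ => ?_
  rw [Quaternion.star_mul_self]
  exact Quaternion.re_coe _
lemma qpd_comb {n : ℕ} {a b : ℝ} (ha : 0 < a) (hb : 0 ≤ b)
    {B C : Matrix (Fin n) (Fin n) ℍ[ℝ]} (hB : QPosDef B) (hC : QPosSemidef C) :
    QPosDef (a • B + b • C) := by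
  intro x hx
  rw [qform_smul_add]
  have h1 := hB x hx
  have h2 := hC x
  nlinarith
lemma qpd_one {n : ℕ} : QPosDef (1 : Matrix (Fin n) (Fin n) ℍ[ℝ]) := by
  intro x hx
  rw [qform_one]
  obtain ⟨i, hi⟩ := Function.ne_iff.mp hx
  have : 0 < Quaternion.normSq (x i) :=
    Quaternion.normSq_nonneg.lt_of_ne (Ne.symm (Quaternion.normSq_ne_zero.2 hi))
  exact lt_of_lt_of_le this (Finset.single_le_sum (f := fun i => Quaternion.normSq (x i))
    (fun j _ => Quaternion.normSq_nonneg) (Finset.mem_univ i))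
lemma qpd_semidef {n : ℕ} {B : Matrix (Fin n) (Fin n) ℍ[ℝ]} (hB : QPosDef B) :
    QPosSemidef B := by
  intro x
  by_cases hx : x = 0
  · subst hx
    simp [qform]
  · exact (hB x hx).le
lemma hermitian_comb {n : ℕ} {a b : ℝ} {B C : Matrix (Fin n) (Fin n) ℍ[ℝ]}
    (hB : B.IsHermitian) (hC : C.IsHermitian) : (a • B + b • C).IsHermitian := by
  refine Matrix.ext fun i j => ?_
  have h1 : B j i = star (B i j) :=
    (congrFun (congrFun hB j) i).symm.trans (Matrix.conjTranspose_apply B i j)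
  have h2 : C j i = star (C i j) :=
    (congrFun (congrFun hC j) i).symm.trans (Matrix.conjTranspose_apply C i j)
  rw [Matrix.conjTranspose_apply, Matrix.add_apply, Matrix.add_apply, Matrix.smul_apply,
    Matrix.smul_apply, Matrix.smul_apply, Matrix.smul_apply, h1, h2]
  simp [Quaternion.star_smul, star_add, star_star]
lemma continuous_coords {n : ℕ} (B C : Matrix (Fin n) (Fin n) ℍ[ℝ]) {f g : ℝ → ℝ}
    (hf : Continuous f) (hg : Continuous g) :
    Continuous fun s : ℝ => coords (f s • B + g s • C) := by
  apply continuous_pi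
  intro t
  obtain ⟨i, j, a⟩ := t
  show Continuous fun s => qcomp ((f s • B + g s • C) i j) a
  simp only [Matrix.add_apply, Matrix.smul_apply]
  fin_cases a <;>
    simp [qcomp, Quaternion.re_smul, Quaternion.imI_smul, Quaternion.imJ_smul,
      Quaternion.imK_smul, smul_eq_mul] <;>
    fun_prop

/-- The Moore determinant of a non-negative (resp. positive) definite hyperhermitian matrix
is non-negative (resp. positive). -/
theorem mooreDet_nonneg_pos {n : ℕ} (P : Matrix (Fin n) (Fin n) ℍ[ℝ] → ℝ)
    (hP : IsMooreDet n P) (A : Matrix (Fin n) (Fin n) ℍ[ℝ]) (hA : A.IsHermitian) :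
    (QPosSemidef A → 0 ≤ P A) ∧ (QPosDef A → 0 < P A) := by
  obtain ⟨⟨p, hp⟩, hdet, hone⟩ := hP
  have key : ∀ B : Matrix (Fin n) (Fin n) ℍ[ℝ], B.IsHermitian → QPosDef B → P B ≠ 0 := by
    intro B hB hpd h0
    have hd := (realMat_posDef hB hpd).det_pos
    rw [hdet B hB, h0] at hd
    simp at hd
  have pos : ∀ B : Matrix (Fin n) (Fin n) ℍ[ℝ], B.IsHermitian → QPosDef B → 0 < P B := by
    intro B hB hpd
    set f : ℝ → ℝ := fun s =>
      MvPolynomial.eval (coords ((1 - s) • (1 : Matrix (Fin n) (Fin n) ℍ[ℝ]) + s • B)) p with hfdef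
    have hcont : Continuous f :=
      (MvPolynomial.continuous_eval (p := p)).comp
        (continuous_coords 1 B (by fun_prop) (by fun_prop))
    have hherm : ∀ s : ℝ, ((1 - s) • (1 : Matrix (Fin n) (Fin n) ℍ[ℝ]) + s • B).IsHermitian :=
      fun s => hermitian_comb Matrix.isHermitian_one hB
    have hfP : ∀ s, f s = P ((1 - s) • 1 + s • B) := fun s => (hp _ (hherm s)).symm
    have hpath : ∀ s ∈ Set.Icc (0:ℝ) 1, QPosDef ((1 - s) • (1 : Matrix (Fin n) (Fin n) ℍ[ℝ]) + s • B) := by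
      intro s hs x hx
      rw [qform_smul_add]
      rcases lt_or_eq_of_le hs.2 with h | h
      · have h1 := qpd_one x hx
        have h2 := qpd_semidef hpd x
        nlinarith [hs.1]
      · subst h
        simpa using hpd x hx
    have hne : ∀ s ∈ Set.Icc (0:ℝ) 1, f s ≠ 0 := fun s hs => by
      rw [hfP]; exact key _ (hherm s) (hpath s hs)
    have hf0 : f 0 = 1 := by rw [hfP]; simpa using hone
    have hf1 : f 1 = P B := by rw [hfP]; congr 1; simp
    by_contra hle
    push_neg at hle
    have hlt : f 1 < 0 := by
      rw [hf1]
      exact lt_of_le_of_ne hle (key B hB hpd)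
    have hmem : (0:ℝ) ∈ Set.Icc (f 1) (f 0) := ⟨hlt.le, by rw [hf0]; norm_num⟩
    obtain ⟨s, hs, hs0⟩ :=
      intermediate_value_Icc' (by norm_num : (0:ℝ) ≤ 1) hcont.continuousOn hmem
    exact hne s hs hs0
  refine ⟨?_, fun hpd => pos A hA hpd⟩
  intro hsd
  set g : ℝ → ℝ := fun ε =>
    MvPolynomial.eval (coords (ε • (1 : Matrix (Fin n) (Fin n) ℍ[ℝ]) + (1:ℝ) • A)) p with hgdef
  have hgc : Continuous g :=
    (MvPolynomial.continuous_eval (p := p)).comp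
      (continuous_coords 1 A continuous_id continuous_const)
  have hgherm : ∀ ε : ℝ, (ε • (1 : Matrix (Fin n) (Fin n) ℍ[ℝ]) + (1:ℝ) • A).IsHermitian :=
    fun ε => hermitian_comb Matrix.isHermitian_one hA
  have hgP : ∀ ε, g ε = P (ε • 1 + (1:ℝ) • A) := fun ε => (hp _ (hgherm ε)).symm
  have hgpos : ∀ ε : ℝ, 0 < ε → 0 < g ε := by
    intro ε hε
    rw [hgP]
    exact pos _ (hgherm ε) (qpd_comb hε zero_le_one qpd_one hsd)
  have hg0 : g 0 = P A := by rw [hgP]; congr 1; simp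
  rw [← hg0]
  have htend : Filter.Tendsto g (nhdsWithin 0 (Set.Ioi 0)) (nhds (g 0)) :=
    hgc.continuousAt.tendsto.mono_left nhdsWithin_le_nhds
  exact ge_of_tendsto htend
    (Filter.eventually_of_mem self_mem_nhdsWithin fun ε hε => (hgpos ε hε).le)
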